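/- For probability vectors p_T and p_S with positive entries and target class t, the non-target distillation loss L_NTD = ∑_{u≠t} p_T(u)·log(p_T(u)/p_S(u)) can be rewritten as (1 - p_T(t))·∑_{u≠t} q_T(u)·log(q_T(u)/q_S(u)) + (1 - p_T(t))·log((1 - p_T(t))/(1 - p_S(t))), where q(u) = p(u)/(1 - p(t)) are the renormalized non-target distributions, assuming p_T(t) < 1 and p_S(t) < 1. -/

import Mathlib

/-! The grouping (chain) rule of KL divergence: each term satisfies
`log (q_T / q_S) = log (p_T / p_S) - log ((1 - p_T t) / (1 - p_S t))`, and the weights `p_T u`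
over `u ≠ t` sum to `1 - p_T t`. -/

open Finset Real

lemma mul_log_div_eq_rescale (p q a b : ℝ) (hq : q ≠ 0) (ha : a ≠ 0) (hb : b ≠ 0) :
    p * log (p / q) = a * (p / a * log (p / a / (q / b))) + p * log (a / b) := by
  rcases eq_or_ne p 0 with rfl | hp
  · simp
  have hratio : p / a / (q / b) = (p / q) / (a / b) := by field_simp
  rw [hratio, log_div (div_ne_zero hp hq) (div_ne_zero ha hb)]
  field_simp
  ring

lemma sum_mul_log_div_eq_rescale {ι : Type*} (s : Finset ι) (p q : ι → ℝ) (a b : ℝ)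
    (hq : ∀ u ∈ s, q u ≠ 0) (ha : a ≠ 0) (hb : b ≠ 0) :
    ∑ u ∈ s, p u * log (p u / q u) =
      a * ∑ u ∈ s, p u / a * log (p u / a / (q u / b)) + (∑ u ∈ s, p u) * log (a / b) := by
  rw [mul_sum, sum_mul, ← sum_add_distrib]
  exact sum_congr rfl fun u hu => mul_log_div_eq_rescale _ _ _ _ (hq u hu) ha hb

theorem stmt_16_general (C : ℕ) (t : Fin C) (pT pS : Fin C → ℝ)
    (hS : ∀ u, 0 < pS u)
    (hsumT : ∑ u, pT u = 1)
    (hTt : pT t < 1) (hSt : pS t < 1)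
    (qT qS : Fin C → ℝ)
    (hqT : ∀ u, qT u = pT u / (1 - pT t)) (hqS : ∀ u, qS u = pS u / (1 - pS t)) :
    ∑ u ∈ Finset.univ.erase t, pT u * Real.log (pT u / pS u) =
      (1 - pT t) * ∑ u ∈ Finset.univ.erase t, qT u * Real.log (qT u / qS u) +
        (1 - pT t) * Real.log ((1 - pT t) / (1 - pS t)) := by
  have hsum : ∑ u ∈ univ.erase t, pT u = 1 - pT t := by
    rw [← hsumT, ← add_sum_erase univ pT (mem_univ t), add_sub_cancel_left]
  simp only [hqT, hqS]
  rw [sum_mul_log_div_eq_rescale _ pT pS (1 - pT t) (1 - pS t) (fun u _ => (hS u).ne')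
    (by linarith) (by linarith), hsum]

theorem stmt_16 (C : ℕ) (hC : 2 ≤ C) (t : Fin C) (pT pS : Fin C → ℝ)
    (hT : ∀ u, 0 < pT u) (hS : ∀ u, 0 < pS u)
    (hsumT : ∑ u, pT u = 1) (hsumS : ∑ u, pS u = 1)
    (hTt : pT t < 1) (hSt : pS t < 1)
    (qT qS : Fin C → ℝ)
    (hqT : ∀ u, qT u = pT u / (1 - pT t)) (hqS : ∀ u, qS u = pS u / (1 - pS t)) :
    ∑ u ∈ Finset.univ.erase t, pT u * Real.log (pT u / pS u) =
      (1 - pT t) * ∑ u ∈ Finset.univ.erase t, qT u * Real.log (qT u / qS u) +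
        (1 - pT t) * Real.log ((1 - pT t) / (1 - pS t)) :=
  stmt_16_general C t pT pS hS hsumT hTt hSt qT qS hqT hqS
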